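/- Let v_k denote the column vector (f_{m,k}^1, ..., f_{m,k}^m)^T of counts of connected sets of K_m × P_k containing at least one vertex per column with prescribed intersection of size i with the k-th column. Then v_k = T^{k-1} · 1, where 1 is the all-ones vector and T is the m × m matrix with entries t_{ij} = C(m,j) - C(m-i,j) if j ≤ m - i and t_{ij} = C(m,j) if j ≥ m - i + 1. -/

import Mathlib

open SimpleGraph Matrix

/-- The grid graph P_m × P_n on vertex set Fin m × Fin n. -/
def gridG (m n : ℕ) : SimpleGraph (Fin m × Fin n) :=
  SimpleGraph.fromRel (fun v w =>
    (v.2 = w.2 ∧ (v.1 : ℕ) + 1 = (w.1 : ℕ)) ∨ (v.1 = w.1 ∧ (v.2 : ℕ) + 1 = (w.2 : ℕ)))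

/-- The graph K_m × P_n on vertex set Fin m × Fin n. -/
def compG (m n : ℕ) : SimpleGraph (Fin m × Fin n) :=
  SimpleGraph.fromRel (fun v w =>
    (v.2 = w.2 ∧ v.1 ≠ w.1) ∨ (v.1 = w.1 ∧ (v.2 : ℕ) + 1 = (w.2 : ℕ)))

/-- A connected set of a graph: a nonempty vertex subset inducing a connected subgraph. -/
def IsConnSet {V : Type} (G : SimpleGraph V) (C : Finset V) : Prop :=
  (C : Set V).Nonempty ∧ (G.induce (C : Set V)).Connected

/-- N(G): the number of connected sets of G. -/
noncomputable def NconnSets (V : Type) [Fintype V] (G : SimpleGraph V) : ℕ :=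
  Nat.card {C : Finset V // IsConnSet G C}

/-- Number of connected sets of K_m × P_n meeting every column whose intersection
with the last column is { (i, n-1) : i ∈ S }. -/
noncomputable def Fcnt (m n : ℕ) (S : Finset (Fin m)) : ℕ :=
  Nat.card {C : Finset (Fin m × Fin n) //
    IsConnSet (compG m n) C ∧ (∀ j : Fin n, ∃ i : Fin m, (i, j) ∈ C) ∧
      ∀ (i : Fin m) (j : Fin n), (j : ℕ) = n - 1 → ((i, j) ∈ C ↔ i ∈ S)}

/-- A canonical subset of Fin m of cardinality min j m. -/
def canon (m j : ℕ) : Finset (Fin m) :=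
  Finset.univ.filter (fun a : Fin m => (a : ℕ) < j)

/-- The transfer matrix T (with 0-based indices corresponding to 1-based i,j). -/
def Tmat (m : ℕ) : Matrix (Fin m) (Fin m) ℕ :=
  fun i j =>
    if (j : ℕ) + 1 ≤ m - ((i : ℕ) + 1) then
      Nat.choose m ((j : ℕ) + 1) - Nat.choose (m - ((i : ℕ) + 1)) ((j : ℕ) + 1)
    else Nat.choose m ((j : ℕ) + 1)

/-!
Write `f(k, S)` for the number of connected sets of `K_m × P_k` meeting every column with last
column `S`. Deleting the last column of such a set (for `k + 1` columns) leaves one counted by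
`f(k, S')` with `S' ∩ S ≠ ∅`, and conversely any such set glues back with `S × {k}`; the deletion
keeps connectivity because a path can only visit the last column through the penultimate one,
which is a clique. Hence `f(k + 1, S) = ∑_{S' ∩ S ≠ ∅} f(k, S')`. There are
`C(m, j) - C(m - i, j)` sets of size `j` meeting a fixed set of size `i`, which is `t_ij`
(the binomial `C(m - i, j)` vanishes for `j > m - i`), so by induction `f(k, S)` only depends on
`|S|` and the vector of these counts is `T^(k-1) 1`.
-/

lemma isConnSet_iff_connected {V : Type} (G : SimpleGraph V) (C : Finset V) :
    IsConnSet G C ↔ (G.induce (C : Set V)).Connected :=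
  ⟨And.right, fun h => ⟨Set.nonempty_coe_sort.mp h.nonempty, h⟩⟩

section GraphLemmas

variable {V W : Type*} {G : SimpleGraph V} {H : SimpleGraph W}

lemma SimpleGraph.IsClique.preconnected_induce {s : Set V} (hs : G.IsClique s) :
    (G.induce s).Preconnected := by
  rw [induce_eq_top.mpr hs]
  exact preconnected_top

theorem SimpleGraph.Connected.induce_of_surjOn {s : Set V} {t : Set W} (f : V → W)
    (hf : ∀ x ∈ s, ∀ y ∈ s, G.Adj x y → f x = f y ∨ H.Adj (f x) (f y))
    (hmaps : Set.MapsTo f s t) (hsurj : Set.SurjOn f s t) (hs : (G.induce s).Connected) :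
    (H.induce t).Connected := by
  set g := Set.MapsTo.restrict f s t hmaps
  have hreach (x y : s) : (H.induce t).Reachable (g x) (g y) := by
    rw [reachable_iff_reflTransGen]
    refine ((reachable_iff_reflTransGen x y).mp (hs.preconnected x y)).lift' _ fun a b hab => ?_
    rcases hf a a.2 b b.2 hab with h | h
    · change Relation.ReflTransGen _ (g a) (g b)
      rw [show g a = g b from Subtype.ext h]
    · exact Relation.ReflTransGen.single h
  have hsurj' := (Set.MapsTo.restrict_surjective_iff hmaps).mpr hsurj
  have : Nonempty t := hs.nonempty.map g
  refine ⟨fun a b => ?_⟩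
  obtain ⟨x, rfl⟩ := hsurj' a
  obtain ⟨y, rfl⟩ := hsurj' b
  exact hreach x y

end GraphLemmas

section Columns

variable {m n : ℕ}

lemma compG_adj {a b : Fin m} {i j : Fin n} :
    (compG m n).Adj (a, i) (b, j) ↔
      (i = j ∧ a ≠ b) ∨ (a = b ∧ ((i : ℕ) + 1 = j ∨ (j : ℕ) + 1 = i)) := by
  simp only [compG, fromRel_adj, ne_eq, Prod.mk.injEq, Fin.ext_iff]
  omega

lemma compG_adj_castSucc {p q : Fin m × Fin n} :
    (compG m (n + 1)).Adj (p.1, p.2.castSucc) (q.1, q.2.castSucc) ↔ (compG m n).Adj p q := by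
  obtain ⟨a, i⟩ := p
  obtain ⟨b, j⟩ := q
  simp only [compG_adj, Fin.castSucc_inj, Fin.val_castSucc]

lemma compG_adj_castSucc_last {a b : Fin m} {j : Fin n} :
    (compG m (n + 1)).Adj (a, j.castSucc) (b, Fin.last n) ↔ a = b ∧ (j : ℕ) + 1 = n := by
  simp only [compG_adj, Fin.ext_iff, Fin.val_castSucc, Fin.val_last]
  omega

lemma isClique_compG_of_forall_snd_eq (s : Set (Fin m × Fin n)) (j : Fin n)
    (hs : ∀ p ∈ s, p.2 = j) : (compG m n).IsClique s := by
  rintro ⟨a, i⟩ hp ⟨b, i'⟩ hq hne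
  obtain rfl := hs _ hp
  obtain rfl := hs _ hq
  exact compG_adj.mpr (Or.inl ⟨rfl, fun h => hne (by rw [h])⟩)

lemma eq_or_compG_adj_of_same_column (a b : Fin m) (j : Fin n) :
    (a, j) = (b, j) ∨ (compG m n).Adj (a, j) (b, j) := by
  rw [compG_adj, Prod.mk.injEq]
  tauto

def column (C : Finset (Fin m × Fin n)) (j : Fin n) : Finset (Fin m) :=
  {a | (a, j) ∈ C}

@[simp]
lemma mem_column {C : Finset (Fin m × Fin n)} {j : Fin n} {a : Fin m} :
    a ∈ column C j ↔ (a, j) ∈ C := by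
  simp [column]

def dropLastColumn (C : Finset (Fin m × Fin (n + 1))) : Finset (Fin m × Fin n) :=
  {p | (p.1, p.2.castSucc) ∈ C}

def snocColumn (C : Finset (Fin m × Fin n)) (S : Finset (Fin m)) :
    Finset (Fin m × Fin (n + 1)) :=
  C.image (Prod.map id Fin.castSucc) ∪ S.image (·, Fin.last n)

@[simp]
lemma mem_dropLastColumn {C : Finset (Fin m × Fin (n + 1))} {p : Fin m × Fin n} :
    p ∈ dropLastColumn C ↔ (p.1, p.2.castSucc) ∈ C := by
  simp [dropLastColumn]

@[simp]
lemma mem_snocColumn_castSucc {C : Finset (Fin m × Fin n)} {S : Finset (Fin m)} {a : Fin m}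
    {j : Fin n} : (a, j.castSucc) ∈ snocColumn C S ↔ (a, j) ∈ C := by
  simp [snocColumn, eq_comm (a := Fin.last n), Fin.castSucc_ne_last]

@[simp]
lemma mem_snocColumn_last {C : Finset (Fin m × Fin n)} {S : Finset (Fin m)} {a : Fin m} :
    (a, Fin.last n) ∈ snocColumn C S ↔ a ∈ S := by
  simp [snocColumn, Fin.castSucc_ne_last]

@[simp]
lemma column_dropLastColumn (C : Finset (Fin m × Fin (n + 1))) (j : Fin n) :
    column (dropLastColumn C) j = column C j.castSucc := by
  ext; simp

@[simp]
lemma column_snocColumn_castSucc (C : Finset (Fin m × Fin n)) (S : Finset (Fin m)) (j : Fin n) :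
    column (snocColumn C S) j.castSucc = column C j := by
  ext; simp

@[simp]
lemma column_snocColumn_last (C : Finset (Fin m × Fin n)) (S : Finset (Fin m)) :
    column (snocColumn C S) (Fin.last n) = S := by
  ext; simp

lemma dropLastColumn_snocColumn (C : Finset (Fin m × Fin n)) (S : Finset (Fin m)) :
    dropLastColumn (snocColumn C S) = C := by
  ext; simp

lemma snocColumn_dropLastColumn (C : Finset (Fin m × Fin (n + 1))) :
    snocColumn (dropLastColumn C) (column C (Fin.last n)) = C := by
  ext ⟨a, j⟩
  cases j using Fin.lastCases <;> simp

end Columns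

section Admissible

variable {m n : ℕ}

def IsAdmissible (C : Finset (Fin m × Fin n)) : Prop :=
  IsConnSet (compG m n) C ∧ ∀ j, (column C j).Nonempty

/-- Collapses the last column onto the vertex `(t, n)` of the penultimate column. Since that column
is a clique, edges go to edges or to single vertices, so connected sets stay connected. -/
def foldLastColumn (t : Fin m) (p : Fin m × Fin (n + 2)) : Fin m × Fin (n + 1) :=
  Fin.lastCases (t, Fin.last n) (fun j => (p.1, j)) p.2

lemma foldLastColumn_eq_or_adj (t : Fin m) {p q : Fin m × Fin (n + 2)}
    (h : (compG m (n + 2)).Adj p q) :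
    foldLastColumn t p = foldLastColumn t q ∨
      (compG m (n + 1)).Adj (foldLastColumn t p) (foldLastColumn t q) := by
  obtain ⟨a, i⟩ := p
  obtain ⟨b, j⟩ := q
  cases i using Fin.lastCases <;> cases j using Fin.lastCases
  case last.last => simp [foldLastColumn]
  all_goals simp only [foldLastColumn, Fin.lastCases_last, Fin.lastCases_castSucc]
  case last.cast j =>
    obtain ⟨-, hj⟩ := compG_adj_castSucc_last.mp h.symm
    obtain rfl : j = Fin.last n := Fin.ext (by simpa using hj)
    exact eq_or_compG_adj_of_same_column _ _ _
  case cast.last i =>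
    obtain ⟨-, hi⟩ := compG_adj_castSucc_last.mp h
    obtain rfl : i = Fin.last n := Fin.ext (by simpa using hi)
    exact eq_or_compG_adj_of_same_column _ _ _
  case cast.cast => exact Or.inr (compG_adj_castSucc.mp h)

lemma IsAdmissible.isConnSet_dropLastColumn {C : Finset (Fin m × Fin (n + 2))}
    (hC : IsAdmissible C) : IsConnSet (compG m (n + 1)) (dropLastColumn C) := by
  obtain ⟨t, ht⟩ := hC.2 (Fin.last n).castSucc
  rw [isConnSet_iff_connected]
  refine ((isConnSet_iff_connected _ _).mp hC.1).induce_of_surjOn (foldLastColumn t)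
    (fun p _ q _ h => foldLastColumn_eq_or_adj t h) ?_ ?_
  · rintro ⟨a, j⟩ hp
    cases j using Fin.lastCases
    · simpa [foldLastColumn] using ht
    · simpa [foldLastColumn] using hp
  · rintro ⟨a, j⟩ hp
    exact ⟨(a, j.castSucc), by simpa using hp, by simp [foldLastColumn]⟩

lemma IsAdmissible.dropLastColumn {C : Finset (Fin m × Fin (n + 2))} (hC : IsAdmissible C) :
    IsAdmissible (dropLastColumn C) :=
  ⟨hC.isConnSet_dropLastColumn, fun j => by simpa using hC.2 j.castSucc⟩

lemma IsAdmissible.column_inter_nonempty {C : Finset (Fin m × Fin (n + 2))}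
    (hC : IsAdmissible C) :
    (column C (Fin.last n).castSucc ∩ column C (Fin.last (n + 1))).Nonempty := by
  obtain ⟨t, ht⟩ := hC.2 (Fin.last n).castSucc
  obtain ⟨s, hs⟩ := hC.2 (Fin.last (n + 1))
  obtain ⟨w⟩ := ((isConnSet_iff_connected _ _).mp hC.1).preconnected
    ⟨_, mem_column.mp ht⟩ ⟨_, mem_column.mp hs⟩
  obtain ⟨d, -, hfst, hsnd⟩ := w.exists_boundary_dart {p | p.1.2 ≠ Fin.last _}
    (by simp [Fin.castSucc_ne_last]) (by simp)
  obtain ⟨⟨⟨⟨a, i⟩, hp⟩, ⟨⟨b, j⟩, hq⟩⟩, hadj⟩ := d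
  obtain ⟨i, rfl⟩ := Fin.exists_castSucc_eq.mpr hfst
  obtain rfl : j = Fin.last _ := not_not.mp hsnd
  obtain ⟨rfl, hi⟩ := compG_adj_castSucc_last.mp hadj
  obtain rfl : i = Fin.last n := Fin.ext (by simpa using hi)
  exact ⟨a, Finset.mem_inter.mpr ⟨mem_column.mpr hp, mem_column.mpr hq⟩⟩

lemma IsAdmissible.snocColumn {C : Finset (Fin m × Fin (n + 1))} {S : Finset (Fin m)}
    (hC : IsAdmissible C) (hS : (column C (Fin.last n) ∩ S).Nonempty) :
    IsAdmissible (snocColumn C S) := by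
  obtain ⟨t, ht⟩ := hS
  rw [Finset.mem_inter, mem_column] at ht
  refine ⟨?_, fun j => ?_⟩
  · rw [isConnSet_iff_connected, _root_.snocColumn, Finset.coe_union, Finset.coe_image,
      Finset.coe_image]
    refine connected_induce_union (v := (t, (Fin.last n).castSucc)) (w := (t, Fin.last (n + 1)))
      ?_ ?_ ⟨_, ht.1, rfl⟩ ⟨_, ht.2, rfl⟩ (compG_adj_castSucc_last.mpr ⟨rfl, by simp⟩)
    · exact (((isConnSet_iff_connected _ _).mp hC.1).induce_of_surjOn _
        (fun p _ q _ h => Or.inr (compG_adj_castSucc.mpr h))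
        (Set.mapsTo_image _ _) (Set.surjOn_image _ _)).preconnected
    · exact (isClique_compG_of_forall_snd_eq _ (Fin.last _) (by simp)).preconnected_induce
  · cases j using Fin.lastCases
    · simpa using ⟨t, ht.2⟩
    · simpa using hC.2 _

end Admissible

section Counting

open Finset
open scoped Classical

variable {m n : ℕ}

lemma Fcnt_succ_eq_card (S : Finset (Fin m)) :
    Fcnt m (n + 1) S =
      #{C : Finset (Fin m × Fin (n + 1)) | IsAdmissible C ∧ column C (Fin.last n) = S} := by
  rw [Fcnt, Nat.card_eq_fintype_card, Fintype.card_subtype]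
  refine congrArg card (filter_congr fun C _ => ?_)
  have hlast (j : Fin (n + 1)) : (j : ℕ) = n + 1 - 1 ↔ j = Fin.last n := by
    simp [Fin.ext_iff]
  simp only [IsAdmissible, Finset.Nonempty, mem_column, Finset.ext_iff, hlast, and_assoc,
    forall_eq]

lemma column_product_univ (S : Finset (Fin m)) (j : Fin n) : column (S ×ˢ univ) j = S := by
  ext; simp

lemma Fcnt_one {S : Finset (Fin m)} (hS : S.Nonempty) : Fcnt m 1 S = 1 := by
  rw [Fcnt_succ_eq_card, card_eq_one]
  refine ⟨S ×ˢ univ, ext fun C => ?_⟩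
  simp only [mem_filter, mem_univ, true_and, mem_singleton]
  constructor
  · rintro ⟨-, rfl⟩
    ext ⟨a, j⟩
    obtain rfl := Subsingleton.elim (α := Fin 1) j (Fin.last 0)
    simp
  · rintro rfl
    refine ⟨⟨(isConnSet_iff_connected _ _).mpr ?_, fun j => ?_⟩, column_product_univ S _⟩
    · have := (hS.product (univ_nonempty (α := Fin 1))).coe_sort
      exact ⟨(isClique_compG_of_forall_snd_eq _ 0 fun _ _ =>
        Subsingleton.elim (α := Fin 1) _ _).preconnected_induce⟩
    · rwa [column_product_univ]

lemma card_admissible_succ_succ (S : Finset (Fin m)) :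
    #{C : Finset (Fin m × Fin (n + 2)) | IsAdmissible C ∧ column C (Fin.last (n + 1)) = S} =
      #{C : Finset (Fin m × Fin (n + 1)) |
        IsAdmissible C ∧ (column C (Fin.last n) ∩ S).Nonempty} := by
  refine card_nbij' dropLastColumn (snocColumn · S) ?_ ?_ ?_ ?_
  · intro C hC
    simp only [coe_filter, mem_univ, true_and, Set.mem_ofPred_eq] at hC ⊢
    obtain ⟨hC, rfl⟩ := hC
    exact ⟨hC.dropLastColumn, by simpa using hC.column_inter_nonempty⟩
  · intro C hC
    simp only [coe_filter, mem_univ, true_and, Set.mem_ofPred_eq] at hC ⊢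
    exact ⟨hC.1.snocColumn hC.2, column_snocColumn_last _ _⟩
  · intro C hC
    simp only [coe_filter, mem_univ, true_and, Set.mem_ofPred_eq] at hC
    rw [← hC.2]
    exact snocColumn_dropLastColumn C
  · intro C _
    exact dropLastColumn_snocColumn C S

lemma Fcnt_succ_succ (S : Finset (Fin m)) :
    Fcnt m (n + 2) S = ∑ S' ∈ {S' | (S' ∩ S).Nonempty}, Fcnt m (n + 1) S' := by
  rw [Fcnt_succ_eq_card, card_admissible_succ_succ,
    card_eq_sum_card_fiberwise (f := fun C => column C (Fin.last n))
      (t := {S' | (S' ∩ S).Nonempty}) fun C hC => by simpa using (mem_filter.mp hC).2.2]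
  refine sum_congr rfl fun S' hS' => ?_
  rw [Fcnt_succ_eq_card, filter_filter]
  refine congrArg card (filter_congr fun C _ => ?_)
  constructor
  · exact fun h => ⟨h.1.1, h.2⟩
  · rintro ⟨hC, rfl⟩
    exact ⟨⟨hC, (mem_filter.mp hS').2⟩, rfl⟩

end Counting

section TransferMatrix

open Finset

variable {m : ℕ}

lemma card_filter_card_eq_and_inter_nonempty (S : Finset (Fin m)) (j : ℕ) :
    #{S' : Finset (Fin m) | #S' = j ∧ (S' ∩ S).Nonempty} = m.choose j - (m - #S).choose j := by
  have h : ({S' | #S' = j ∧ (S' ∩ S).Nonempty} : Finset (Finset (Fin m))) =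
      powersetCard j univ \ powersetCard j Sᶜ := by
    ext S'
    simp only [mem_filter, mem_univ, true_and, mem_sdiff, mem_powersetCard, subset_univ,
      subset_compl_iff_disjoint_right, disjoint_iff_inter_eq_empty,
      nonempty_iff_ne_empty]
    tauto
  rw [h, card_sdiff_of_subset (powersetCard_mono (subset_univ _)), card_powersetCard,
    card_powersetCard, card_univ, card_compl, Fintype.card_fin]

lemma Tmat_eq_card {S : Finset (Fin m)} {i : Fin m} (hS : #S = i + 1) (j : Fin m) :
    Tmat m i j = #{S' : Finset (Fin m) | #S' = j + 1 ∧ (S' ∩ S).Nonempty} := by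
  rw [card_filter_card_eq_and_inter_nonempty, hS, Tmat]
  split_ifs with h
  · rfl
  · rw [Nat.choose_eq_zero_of_lt (n := m - (i + 1)) (by omega), Nat.sub_zero]

lemma sum_eq_sum_fiberwise_card {M : Type*} [AddCommMonoid M] (A : Finset (Finset (Fin m)))
    (hA : ∀ S ∈ A, S.Nonempty) (f : Finset (Fin m) → M) :
    ∑ S ∈ A, f S = ∑ j : Fin m, ∑ S ∈ A with #S = j + 1, f S := by
  let succVal : Fin m ↪ ℕ := ⟨fun j => j + 1, fun a b h => Fin.ext (by simpa using h)⟩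
  rw [← sum_fiberwise_of_maps_to (g := card) (t := univ.map succVal), sum_map]
  · rfl
  · intro S hS
    have hpos := (hA S hS).card_pos
    have hle := card_le_univ S
    rw [Fintype.card_fin] at hle
    exact mem_map.mpr ⟨⟨#S - 1, by omega⟩, mem_univ _, show #S - 1 + 1 = #S by omega⟩

lemma Fcnt_eq_mulVec (n : ℕ) {S : Finset (Fin m)} {i : Fin m} (hS : #S = i + 1) :
    Fcnt m (n + 1) S = ((Tmat m) ^ n *ᵥ fun _ => 1) i := by
  induction n generalizing S i with
  | zero => rw [Fcnt_one (card_pos.mp (by omega)), pow_zero, one_mulVec]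
  | succ n ih =>
    have hA (S' : Finset (Fin m)) (h : S' ∈ ({S' | (S' ∩ S).Nonempty} : Finset _)) :
        S'.Nonempty :=
      (mem_filter.mp h).2.mono inter_subset_left
    calc Fcnt m (n + 2) S
        = ∑ S' ∈ {S' | (S' ∩ S).Nonempty}, Fcnt m (n + 1) S' := Fcnt_succ_succ S
      _ = ∑ j : Fin m, ∑ S' ∈ {S' | (S' ∩ S).Nonempty} with #S' = j + 1, Fcnt m (n + 1) S' :=
        sum_eq_sum_fiberwise_card _ hA _
      _ = ∑ j : Fin m, Tmat m i j * ((Tmat m) ^ n *ᵥ fun _ => 1) j := by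
        refine sum_congr rfl fun j _ => ?_
        rw [sum_congr rfl fun S' hS' => ih (mem_filter.mp hS').2, sum_const, smul_eq_mul,
          Tmat_eq_card hS, filter_filter]
        simp only [and_comm]
      _ = ((Tmat m) ^ (n + 1) *ᵥ fun _ => 1) i := by
        rw [pow_succ', ← mulVec_mulVec]
        rfl

end TransferMatrix

lemma card_canon {m : ℕ} (i : Fin m) : (canon m (i + 1)).card = i + 1 := by
  simp only [canon, Fin.card_filter_val_lt]
  omega

theorem f_vector_eq_transfer (m k : ℕ) (hk : 1 ≤ k) (i : Fin m) :
    Fcnt m k (canon m ((i : ℕ) + 1)) =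
      ((Tmat m) ^ (k - 1)).mulVec (fun _ => 1) i := by
  obtain ⟨n, rfl⟩ : ∃ n, k = n + 1 := ⟨k - 1, by omega⟩
  exact Fcnt_eq_mulVec n (card_canon i)
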